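/- Let G be a connected graph of order n with minimum degree δ = 2 and power domination number γ_p = 2. Then rad_p(G) ≤ n - 5. -/

import Mathlib

open scoped Classical

/-- The closed neighbourhood `N[S]` of a finset of vertices. -/
noncomputable def closedNbhd {V : Type*} [Fintype V] (G : SimpleGraph V) (S : Finset V) :
    Finset V :=
  S ∪ S.biUnion fun v => G.neighborFinset v

/-- One propagation step of power domination. -/
noncomputable def pdStep {V : Type*} [Fintype V] (G : SimpleGraph V) (A : Finset V) : Finset V :=
  A ∪ closedNbhd G (A.filter fun v => (G.neighborFinset v \ A).card ≤ 1)

/-- The monitored sets `P^i(S)`, with `P^0(S) = ∅` and `P^1(S) = N[S]`. -/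
noncomputable def pdSeq {V : Type*} [Fintype V] (G : SimpleGraph V) (S : Finset V) : ℕ → Finset V
  | 0 => ∅
  | 1 => closedNbhd G S
  | (i + 2) => pdStep G (pdSeq G S (i + 1))

/-- `S` is a power dominating set of `G`. -/
def IsPDS {V : Type*} [Fintype V] (G : SimpleGraph V) (S : Finset V) : Prop :=
  ∃ i, pdSeq G S i = Finset.univ

/-- The power domination number `γ_p(G)`. -/
noncomputable def pdNum {V : Type*} [Fintype V] (G : SimpleGraph V) : ℕ :=
  sInf {k | ∃ S : Finset V, IsPDS G S ∧ S.card = k}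

/-- The propagation radius `rad_p(G, S)` of a PDS `S`. -/
noncomputable def pdRadS {V : Type*} [Fintype V] (G : SimpleGraph V) (S : Finset V) : ℕ :=
  sInf {i | pdSeq G S i = Finset.univ}

/-- The propagation radius `rad_p(G)`. -/
noncomputable def pdRad {V : Type*} [Fintype V] (G : SimpleGraph V) : ℕ :=
  sInf {r | ∃ S : Finset V, IsPDS G S ∧ S.card = pdNum G ∧ pdRadS G S = r}

/-!
Outside a fully monitored set, every propagation step monitors at least one new vertex, so a
power dominating set `T` with `|N[T]| ≥ 6` has radius at most `1 + (n - 6)`. It therefore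
suffices to find a power dominating pair whose closed neighbourhood has at least six vertices.
If every power dominating pair `{u, v}` had `|N[u] ∪ N[v]| ≤ 5`, then, since all degrees are at
least 2, a common neighbour of `u` and `v` (or `v` itself, if `u ~ v` and `deg u = 2`) would
power dominate alone, unless either `N[u] ∪ N[v]` lies in a single `N[x]` with `|N[x]| ≥ 5`,
and then `{x, y}` for any `y ∉ N[x]` is a larger pair, or `u ≁ v` have the same three
neighbours, in which case connectivity forces `V = N[u] ∪ {v}` and `{u}` power dominates.
Either way this contradicts `γ_p = 2`.
-/

section

variable {V : Type*} [Fintype V] {G : SimpleGraph V}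

section ClosedNbhd

lemma mem_closedNbhd {S : Finset V} {x : V} :
    x ∈ closedNbhd G S ↔ x ∈ S ∨ ∃ v ∈ S, G.Adj v x := by
  simp [closedNbhd]

lemma mem_closedNbhd_singleton {x y : V} : y ∈ closedNbhd G {x} ↔ y = x ∨ G.Adj x y := by
  simp [mem_closedNbhd]

lemma self_mem_closedNbhd_singleton (x : V) : x ∈ closedNbhd G {x} :=
  mem_closedNbhd_singleton.mpr (.inl rfl)

lemma mem_closedNbhd_singleton_of_adj {x y : V} (h : G.Adj x y) : y ∈ closedNbhd G {x} :=
  mem_closedNbhd_singleton.mpr (.inr h)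

lemma closedNbhd_singleton (x : V) : closedNbhd G {x} = insert x (G.neighborFinset x) := by
  ext y
  simp [mem_closedNbhd_singleton]

lemma card_closedNbhd_singleton (x : V) : (closedNbhd G {x}).card = G.degree x + 1 := by
  rw [closedNbhd_singleton, Finset.card_insert_of_notMem (by simp), G.card_neighborFinset_eq_degree]

lemma closedNbhd_mono {S T : Finset V} (h : S ⊆ T) : closedNbhd G S ⊆ closedNbhd G T :=
  Finset.union_subset_union h (Finset.biUnion_subset_biUnion_of_subset_left _ h)

lemma closedNbhd_union (S T : Finset V) :
    closedNbhd G (S ∪ T) = closedNbhd G S ∪ closedNbhd G T := by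
  ext x
  simp only [mem_closedNbhd, Finset.mem_union]
  grind

lemma closedNbhd_pair (u v : V) :
    closedNbhd G {u, v} = closedNbhd G {u} ∪ closedNbhd G {v} := by
  rw [Finset.insert_eq, closedNbhd_union]

lemma closedNbhd_univ : closedNbhd G Finset.univ = Finset.univ :=
  Finset.univ_subset_iff.mp Finset.subset_union_left

lemma card_neighborFinset_sdiff_add_card_le {x : V} {s X : Finset V}
    (hs : s ⊆ G.neighborFinset x) (hX : s ⊆ X) :
    (G.neighborFinset x \ X).card + s.card ≤ G.degree x := by
  have hle := Finset.card_le_card (Finset.sdiff_subset_sdiff (le_refl (G.neighborFinset x)) hX)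
  rw [Finset.card_sdiff_of_subset hs, G.card_neighborFinset_eq_degree] at hle
  have := G.card_neighborFinset_eq_degree x ▸ Finset.card_le_card hs
  omega

theorem SimpleGraph.Connected.eq_univ_of_adj_mem (hconn : G.Connected) {K : Finset V} {z : V}
    (hz : z ∈ K) (hK : ∀ x ∈ K, ∀ y, G.Adj x y → y ∈ K) : K = Finset.univ := by
  have walk_mem : ∀ a b (p : G.Walk a b), a ∈ K → b ∈ K := by
    intro a b p
    induction p with
    | nil => exact id
    | cons h _ ih => exact fun ha => ih (hK _ ha _ h)
  exact Finset.eq_univ_iff_forall.mpr fun y => walk_mem z y (hconn z y).some hz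

end ClosedNbhd

section Propagation

lemma subset_pdStep (A : Finset V) : A ⊆ pdStep G A :=
  Finset.subset_union_left

lemma pdStep_mono {A B : Finset V} (h : A ⊆ B) : pdStep G A ⊆ pdStep G B := by
  refine Finset.union_subset_union h (closedNbhd_mono fun v hv => ?_)
  rw [Finset.mem_filter] at hv ⊢
  exact ⟨h hv.1, (Finset.card_le_card (Finset.sdiff_subset_sdiff le_rfl h)).trans hv.2⟩

lemma closedNbhd_singleton_subset_pdStep {A : Finset V} {x : V} (hx : x ∈ A)
    (h : (G.neighborFinset x \ A).card ≤ 1) : closedNbhd G {x} ⊆ pdStep G A :=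
  (closedNbhd_mono (Finset.singleton_subset_iff.mpr (Finset.mem_filter.mpr ⟨hx, h⟩))).trans
    Finset.subset_union_right

lemma pdSeq_one (S : Finset V) : pdSeq G S 1 = closedNbhd G S := rfl

lemma pdSeq_succ (S : Finset V) {k : ℕ} (hk : 1 ≤ k) :
    pdSeq G S (k + 1) = pdStep G (pdSeq G S k) := by
  obtain ⟨i, rfl⟩ := Nat.exists_eq_add_of_le' hk
  rfl

lemma pdSeq_monotone (S : Finset V) : Monotone (pdSeq G S) := by
  refine monotone_nat_of_le_succ fun k => ?_
  rcases k with _ | k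
  · exact Finset.empty_subset _
  · exact subset_pdStep _

lemma pdSeq_add_subset {S T : Finset V} {j : ℕ} (hj : 1 ≤ j)
    (h : closedNbhd G S ⊆ pdSeq G T j) (k : ℕ) : pdSeq G S (k + 1) ⊆ pdSeq G T (k + j) := by
  induction k with
  | zero => rw [zero_add, zero_add]; exact h
  | succ k ih =>
    rw [pdSeq_succ S (by omega), show k + 1 + j = k + j + 1 by omega, pdSeq_succ T (by omega)]
    exact pdStep_mono ih

lemma IsPDS.of_closedNbhd_subset_pdSeq {S T : Finset V} {j : ℕ} (hS : IsPDS G S) (hj : 1 ≤ j)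
    (h : closedNbhd G S ⊆ pdSeq G T j) : IsPDS G T := by
  obtain ⟨i, hi⟩ := hS
  refine ⟨i + j, Finset.univ_subset_iff.mp ?_⟩
  calc Finset.univ = pdSeq G S i := hi.symm
    _ ⊆ pdSeq G S (i + 1) := pdSeq_monotone S (by omega)
    _ ⊆ pdSeq G T (i + j) := pdSeq_add_subset hj h i

lemma IsPDS.of_closedNbhd_subset {S T : Finset V} (hS : IsPDS G S)
    (h : closedNbhd G S ⊆ closedNbhd G T) : IsPDS G T :=
  hS.of_closedNbhd_subset_pdSeq le_rfl h

lemma isPDS_univ : IsPDS G Finset.univ :=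
  ⟨1, closedNbhd_univ⟩

end Propagation

section Radius

lemma pdSeq_eq_univ_of_pdSeq_succ_eq {S : Finset V} {k : ℕ} (hS : IsPDS G S) (hk : 1 ≤ k)
    (h : pdSeq G S (k + 1) = pdSeq G S k) : pdSeq G S k = Finset.univ := by
  have stable : ∀ j, k ≤ j → pdSeq G S j = pdSeq G S k := by
    intro j hj
    induction j, hj using Nat.le_induction with
    | base => rfl
    | succ j hkj ih => rw [pdSeq_succ S (hk.trans hkj), ih, ← pdSeq_succ S hk, h]
  obtain ⟨i, hi⟩ := hS
  rw [← stable (max i k) (le_max_right i k)]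
  exact Finset.univ_subset_iff.mp (hi ▸ pdSeq_monotone S (le_max_left i k))

lemma card_pdSeq_lt_card_pdSeq_succ {S : Finset V} {k : ℕ} (hS : IsPDS G S) (hk : 1 ≤ k)
    (h : pdSeq G S k ≠ Finset.univ) : (pdSeq G S k).card < (pdSeq G S (k + 1)).card :=
  Finset.card_lt_card <| (pdSeq_monotone S k.le_succ).ssubset_of_ne fun heq =>
    h (pdSeq_eq_univ_of_pdSeq_succ_eq hS hk heq.symm)

lemma pdRadS_le {S : Finset V} {k : ℕ} (hS : IsPDS G S) (hk : 1 ≤ k) :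
    pdRadS G S ≤ k + (Fintype.card V - (pdSeq G S k).card) := by
  suffices ∀ m k, 1 ≤ k → Fintype.card V ≤ (pdSeq G S k).card + m →
      pdRadS G S ≤ k + m from this _ k hk (by omega)
  intro m
  induction m with
  | zero =>
    intro k _ hcard
    exact Nat.sInf_le (Finset.eq_univ_of_card _ (le_antisymm (Finset.card_le_univ _) hcard))
  | succ m ih =>
    intro k hk hcard
    by_cases h : pdSeq G S k = Finset.univ
    · exact (Nat.sInf_le h).trans (by omega)
    · have := card_pdSeq_lt_card_pdSeq_succ hS hk h
      have := ih (k + 1) (by omega) (by omega)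
      omega

lemma pdNum_le_card {S : Finset V} (hS : IsPDS G S) : pdNum G ≤ S.card :=
  Nat.sInf_le ⟨S, hS, rfl⟩

lemma exists_isPDS_card_eq_pdNum : ∃ S, IsPDS G S ∧ S.card = pdNum G :=
  Nat.sInf_mem (s := {k | ∃ S : Finset V, IsPDS G S ∧ S.card = k}) ⟨_, _, isPDS_univ, rfl⟩

lemma pdRad_le_pdRadS {S : Finset V} (hS : IsPDS G S) (h : S.card = pdNum G) :
    pdRad G ≤ pdRadS G S :=
  Nat.sInf_le ⟨S, hS, h, rfl⟩

end Radius

section SingleVertex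

/-- From `w`, propagation forces `N[u]` at step 2 and then `N[v]` at step 3. -/
lemma IsPDS.singleton_of_pair {u v w : V} (hS : IsPDS G {u, v})
    (hu : u ∈ closedNbhd G {w}) (hv : v ∈ closedNbhd G {w})
    (hu_out : (G.neighborFinset u \ closedNbhd G {w}).card ≤ 1)
    (hv_out : (G.neighborFinset v \ (closedNbhd G {u} ∪ closedNbhd G {w})).card ≤ 1) :
    IsPDS G {w} := by
  have hNu : closedNbhd G {u} ⊆ pdSeq G {w} 2 := closedNbhd_singleton_subset_pdStep hu hu_out
  have hNw : closedNbhd G {w} ⊆ pdSeq G {w} 2 := subset_pdStep _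
  have hNv : closedNbhd G {v} ⊆ pdSeq G {w} 3 :=
    closedNbhd_singleton_subset_pdStep (hNw hv) <| hv_out.trans' <|
      Finset.card_le_card (Finset.sdiff_subset_sdiff le_rfl (Finset.union_subset hNu hNw))
  refine hS.of_closedNbhd_subset_pdSeq (j := 3) (by norm_num) ?_
  rw [closedNbhd_pair]
  exact Finset.union_subset (hNu.trans (subset_pdStep _)) hNv

lemma IsPDS.singleton_of_adj_of_degree_le_two {u v : V} (hS : IsPDS G {u, v})
    (hadj : G.Adj u v) (hu : G.degree u ≤ 2) : IsPDS G {v} := by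
  refine hS.singleton_of_pair (mem_closedNbhd_singleton_of_adj hadj.symm)
    (self_mem_closedNbhd_singleton v) ?_ ?_
  · have := card_neighborFinset_sdiff_add_card_le (s := {v}) (X := closedNbhd G {v})
      (by simpa using hadj) (by simpa using self_mem_closedNbhd_singleton v)
    rw [Finset.card_singleton] at this
    omega
  · rw [Finset.sdiff_eq_empty_iff_subset.mpr fun z hz => Finset.mem_union_right _
      (mem_closedNbhd_singleton_of_adj ((G.mem_neighborFinset v z).mp hz))]
    simp

lemma isPDS_singleton_of_univ_subset_insert {x v w : V} (hxw : G.Adj x w) (hvw : G.Adj v w)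
    (h : Finset.univ ⊆ insert v (closedNbhd G {x})) : IsPDS G {x} := by
  have hw_out : G.neighborFinset w \ closedNbhd G {x} ⊆ {v} := fun z hz => by
    rw [Finset.mem_sdiff] at hz
    simpa [hz.2] using h (Finset.mem_univ z)
  have hNw : closedNbhd G {w} ⊆ pdSeq G {x} 2 :=
    closedNbhd_singleton_subset_pdStep (mem_closedNbhd_singleton_of_adj hxw)
      ((Finset.card_le_card hw_out).trans (Finset.card_singleton v).le)
  exact ⟨2, Finset.univ_subset_iff.mp (h.trans (Finset.insert_subset
    (hNw (mem_closedNbhd_singleton_of_adj hvw.symm)) (subset_pdStep _)))⟩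

lemma notMem_closedNbhd_singleton {u v : V} (huv : u ≠ v) (hadj : ¬ G.Adj u v) :
    v ∉ closedNbhd G {u} := by
  simp [mem_closedNbhd_singleton, huv.symm, hadj]

lemma exists_isPDS_singleton_of_not_adj {u v : V} (hS : IsPDS G {u, v})
    (hAB : (closedNbhd G {u} ∪ closedNbhd G {v}).card ≤ 5) (huv : u ≠ v) (hadj : ¬ G.Adj u v)
    (hu : G.degree u = 2) (hv : 2 ≤ G.degree v) : ∃ w, IsPDS G {w} := by
  have hvA := notMem_closedNbhd_singleton huv hadj
  have huB := notMem_closedNbhd_singleton huv.symm fun h => hadj h.symm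
  have hA := card_closedNbhd_singleton (G := G) u
  have hB := card_closedNbhd_singleton (G := G) v
  have hunion := Finset.card_union_add_card_inter (closedNbhd G {u}) (closedNbhd G {v})
  obtain ⟨w, hw⟩ : (closedNbhd G {u} ∩ closedNbhd G {v}).Nonempty :=
    Finset.card_pos.mp (by omega)
  obtain ⟨hwA, hwB⟩ := Finset.mem_inter.mp hw
  have huw : G.Adj u w :=
    (mem_closedNbhd_singleton.mp hwA).resolve_left fun h => huB (h ▸ hwB)
  have hvw : G.Adj v w :=
    (mem_closedNbhd_singleton.mp hwB).resolve_left fun h => hvA (h ▸ hwA)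
  -- `N[v] \ N[u]` has at most two elements, one of which is `v` itself.
  have hv_out : (G.neighborFinset v \ closedNbhd G {u}).card ≤ 1 := by
    have hsub : insert v (G.neighborFinset v \ closedNbhd G {u}) ⊆
        (closedNbhd G {u} ∪ closedNbhd G {v}) \ closedNbhd G {u} := by
      rw [closedNbhd_singleton v]
      intro z
      simp only [Finset.mem_insert, Finset.mem_sdiff, Finset.mem_union]
      rintro (rfl | ⟨hz, hzA⟩) <;> simp_all
    have := Finset.card_le_card hsub
    rw [Finset.card_insert_of_notMem (by simp), Finset.card_sdiff_of_subset
      Finset.subset_union_left] at this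
    omega
  refine ⟨w, hS.singleton_of_pair (mem_closedNbhd_singleton_of_adj huw.symm)
    (mem_closedNbhd_singleton_of_adj hvw.symm) ?_ ?_⟩
  · have := card_neighborFinset_sdiff_add_card_le (s := {w}) (X := closedNbhd G {w})
      (by simpa using huw) (by simpa using self_mem_closedNbhd_singleton w)
    rw [Finset.card_singleton] at this
    omega
  · exact hv_out.trans' (Finset.card_le_card
      (Finset.sdiff_subset_sdiff le_rfl Finset.subset_union_left))

end SingleVertex

section SmallPairs

variable (G) in
/-- The negation of the conclusion of `exists_isPDS_six_le_card_closedNbhd`. -/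
def AllSmallPairs : Prop :=
  ∀ T : Finset V, IsPDS G T → T.card = 2 → (closedNbhd G T).card ≤ 5

lemma false_of_closedNbhd_subset_closedNbhd_singleton (hno : ∀ x, ¬ IsPDS G {x})
    (hsmall : AllSmallPairs G) {S : Finset V} {x : V} (hS : IsPDS G S)
    (hsub : closedNbhd G S ⊆ closedNbhd G {x}) (hx : 5 ≤ (closedNbhd G {x}).card) : False := by
  obtain ⟨y, hy⟩ : ∃ y, y ∉ closedNbhd G {x} := by
    by_contra! h
    exact hno x ⟨1, Finset.eq_univ_iff_forall.mpr h⟩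
  have hxy : x ≠ y := fun h => hy (h ▸ self_mem_closedNbhd_singleton x)
  have hpair : IsPDS G {x, y} :=
    hS.of_closedNbhd_subset (hsub.trans (closedNbhd_mono (by simp)))
  have hins : insert y (closedNbhd G {x}) ⊆ closedNbhd G {x, y} := by
    rw [closedNbhd_pair]
    exact Finset.insert_subset (Finset.mem_union_right _ (self_mem_closedNbhd_singleton y))
      Finset.subset_union_left
  have := hsmall _ hpair (Finset.card_pair hxy)
  have := Finset.card_le_card hins
  rw [Finset.card_insert_of_notMem hy] at this
  omega

lemma false_of_adj (hno : ∀ x, ¬ IsPDS G {x}) (hsmall : AllSmallPairs G) {u v : V}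
    (hS : IsPDS G {u, v}) (hadj : G.Adj u v) (hu : 3 ≤ G.degree u)
    (hle : G.degree u ≤ G.degree v) : False := by
  have hAB := closedNbhd_pair (G := G) u v ▸ hsmall _ hS (Finset.card_pair hadj.ne)
  have hA := card_closedNbhd_singleton (G := G) u
  have hB := card_closedNbhd_singleton (G := G) v
  by_cases hB5 : 5 ≤ (closedNbhd G {v}).card
  · refine false_of_closedNbhd_subset_closedNbhd_singleton hno hsmall hS ?_ hB5
    rw [closedNbhd_pair, ← Finset.eq_of_subset_of_card_le Finset.subset_union_right (by omega)]
  have hunion := Finset.card_union_add_card_inter (closedNbhd G {u}) (closedNbhd G {v})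
  obtain ⟨w, hw, hwuv⟩ := Finset.not_subset.mp
    fun h : closedNbhd G {u} ∩ closedNbhd G {v} ⊆ {u, v} =>
      absurd (Finset.card_le_card h) (by rw [Finset.card_pair hadj.ne]; omega)
  obtain ⟨hwA, hwB⟩ := Finset.mem_inter.mp hw
  simp only [Finset.mem_insert, Finset.mem_singleton, not_or] at hwuv
  have huw : G.Adj u w := (mem_closedNbhd_singleton.mp hwA).resolve_left hwuv.1
  have hvw : G.Adj v w := (mem_closedNbhd_singleton.mp hwB).resolve_left hwuv.2
  refine hno w (hS.singleton_of_pair (mem_closedNbhd_singleton_of_adj huw.symm)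
    (mem_closedNbhd_singleton_of_adj hvw.symm) ?_ ?_)
  · have := card_neighborFinset_sdiff_add_card_le (G := G) (x := u) (s := {v, w})
      (X := closedNbhd G {w})
      (by simp [Finset.insert_subset_iff, hadj, huw])
      (by simp [Finset.insert_subset_iff, mem_closedNbhd_singleton, hvw.symm])
    rw [Finset.card_pair (Ne.symm hwuv.2)] at this
    omega
  · have := card_neighborFinset_sdiff_add_card_le (G := G) (x := v) (s := {u, w})
      (X := closedNbhd G {u} ∪ closedNbhd G {w})
      (by simp [Finset.insert_subset_iff, hadj.symm, hvw])
      (by simp [Finset.insert_subset_iff, mem_closedNbhd_singleton])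
    rw [Finset.card_pair (Ne.symm hwuv.1)] at this
    omega

lemma neighborFinset_eq_of_not_adj {u v : V}
    (hAB : (closedNbhd G {u} ∪ closedNbhd G {v}).card ≤ 5) (huv : u ≠ v) (hadj : ¬ G.Adj u v)
    (hu : 3 ≤ G.degree u) (hv : 3 ≤ G.degree v) : G.neighborFinset v = G.neighborFinset u := by
  have hvA := notMem_closedNbhd_singleton huv hadj
  have hA := card_closedNbhd_singleton (G := G) u
  have hinsA : insert v (closedNbhd G {u}) ⊆ closedNbhd G {u} ∪ closedNbhd G {v} :=
    Finset.insert_subset (Finset.mem_union_right _ (self_mem_closedNbhd_singleton v))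
      Finset.subset_union_left
  have hcard := Finset.card_le_card hinsA
  rw [Finset.card_insert_of_notMem hvA] at hcard
  have hsub : G.neighborFinset v ⊆ G.neighborFinset u := by
    intro z hz
    have hzv : z ≠ v := fun h => G.irrefl (h ▸ (G.mem_neighborFinset v z).mp hz)
    have hzA : z ∈ closedNbhd G {u} := by
      by_contra hzA
      have hins : insert z (insert v (closedNbhd G {u})) ⊆
          closedNbhd G {u} ∪ closedNbhd G {v} := Finset.insert_subset
        (Finset.mem_union_right _
          (mem_closedNbhd_singleton_of_adj ((G.mem_neighborFinset v z).mp hz))) hinsA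
      have := Finset.card_le_card hins
      rw [Finset.card_insert_of_notMem (by simp [hzv, hzA]),
        Finset.card_insert_of_notMem hvA] at this
      omega
    have hzu : z ≠ u := fun h => hadj (G.adj_symm (h ▸ (G.mem_neighborFinset v z).mp hz))
    simpa [mem_closedNbhd_singleton, hzu] using hzA
  exact Finset.eq_of_subset_of_card_le hsub (by simp; omega)

lemma false_of_not_adj (hconn : G.Connected) (hno : ∀ x, ¬ IsPDS G {x})
    (hsmall : AllSmallPairs G) {u v : V} (hS : IsPDS G {u, v}) (huv : u ≠ v)
    (hadj : ¬ G.Adj u v) (hu : 3 ≤ G.degree u) (hv : 3 ≤ G.degree v) : False := by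
  have hAB := closedNbhd_pair (G := G) u v ▸ hsmall _ hS (Finset.card_pair huv)
  have hN := neighborFinset_eq_of_not_adj hAB huv hadj hu hv
  set K := insert v (closedNbhd G {u}) with hK
  have hKcard : K.card = G.degree u + 2 := by
    rw [hK, Finset.card_insert_of_notMem (notMem_closedNbhd_singleton huv hadj),
      card_closedNbhd_singleton]
  have hpair_sub : closedNbhd G {u, v} ⊆ K := by
    rw [closedNbhd_pair, closedNbhd_singleton v, hN]
    refine Finset.union_subset (Finset.subset_insert _ _) (Finset.insert_subset_insert _ ?_)
    exact fun z hz => mem_closedNbhd_singleton_of_adj ((G.mem_neighborFinset u z).mp hz)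
  -- Each `{u, w}` with `w ∈ N(u)` is again a power dominating pair, which confines `N[w]` to `K`.
  have hNw : ∀ w, G.Adj u w → closedNbhd G {w} ⊆ K := by
    intro w huw
    have hvw : G.Adj v w := by rw [← G.mem_neighborFinset, hN, G.mem_neighborFinset]; exact huw
    have hK_sub : K ⊆ closedNbhd G {u, w} := by
      rw [closedNbhd_pair]
      exact Finset.insert_subset
        (Finset.mem_union_right _ (mem_closedNbhd_singleton_of_adj hvw.symm))
        Finset.subset_union_left
    have := hsmall _ (hS.of_closedNbhd_subset (hpair_sub.trans hK_sub)) (Finset.card_pair huw.ne)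
    rw [Finset.eq_of_subset_of_card_le hK_sub (by omega), closedNbhd_pair]
    exact Finset.subset_union_right
  have hK_univ : K = Finset.univ := by
    refine hconn.eq_univ_of_adj_mem (Finset.mem_insert_self v _) fun x hx y hxy => ?_
    rcases Finset.mem_insert.mp hx with rfl | hx
    · refine hpair_sub ?_
      rw [closedNbhd_pair]
      exact Finset.mem_union_right _ (mem_closedNbhd_singleton_of_adj hxy)
    rcases mem_closedNbhd_singleton.mp hx with rfl | hux
    · exact Finset.mem_insert_of_mem (mem_closedNbhd_singleton_of_adj hxy)
    · exact hNw x hux (mem_closedNbhd_singleton_of_adj hxy)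
  obtain ⟨w, hw⟩ : (G.neighborFinset u).Nonempty := Finset.card_pos.mp (by simp; omega)
  have huw := (G.mem_neighborFinset u w).mp hw
  exact hno u (isPDS_singleton_of_univ_subset_insert huw
    ((G.mem_neighborFinset v w).mp (hN ▸ hw)) hK_univ.ge)

end SmallPairs

lemma exists_isPDS_six_le_card_closedNbhd (hconn : G.Connected) (hdeg : ∀ x, 2 ≤ G.degree x)
    (hno : ∀ x, ¬ IsPDS G {x}) {u v : V} (huv : u ≠ v) (hS : IsPDS G {u, v}) :
    ∃ T, IsPDS G T ∧ T.card = 2 ∧ 6 ≤ (closedNbhd G T).card := by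
  by_contra! hbig
  have hsmall : AllSmallPairs G := fun T hT hT2 => Nat.le_of_lt_succ (hbig T hT hT2)
  wlog hle : G.degree u ≤ G.degree v generalizing u v
  · exact this huv.symm (Finset.pair_comm u v ▸ hS) (le_of_not_ge hle)
  have hAB := closedNbhd_pair (G := G) u v ▸ hsmall _ hS (Finset.card_pair huv)
  rcases (hdeg u).eq_or_lt with hu | hu
  · by_cases hadj : G.Adj u v
    · exact hno v (hS.singleton_of_adj_of_degree_le_two hadj hu.ge)
    · obtain ⟨w, hw⟩ := exists_isPDS_singleton_of_not_adj hS hAB huv hadj hu.symm (hdeg v)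
      exact hno w hw
  · by_cases hadj : G.Adj u v
    · exact false_of_adj hno hsmall hS hadj hu hle
    · exact false_of_not_adj hconn hno hsmall hS huv hadj hu (hu.trans_le hle)

end

theorem stmt_10 {V : Type*} [Fintype V] (G : SimpleGraph V) (n : ℕ)
    (hn : Fintype.card V = n) (hconn : G.Connected)
    (hdelta : G.minDegree = 2) (hgamma : pdNum G = 2) :
    pdRad G ≤ n - 5 := by
  have hdeg : ∀ x, 2 ≤ G.degree x := fun x => hdelta ▸ G.minDegree_le_degree x
  have hno : ∀ x, ¬ IsPDS G {x} := fun x hx => by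
    simpa [hgamma] using pdNum_le_card hx
  obtain ⟨S, hS, hS2⟩ := exists_isPDS_card_eq_pdNum (G := G)
  obtain ⟨u, v, huv, rfl⟩ := Finset.card_eq_two.mp (hS2.trans hgamma)
  obtain ⟨T, hT, hT2, hT6⟩ := exists_isPDS_six_le_card_closedNbhd hconn hdeg hno huv hS
  have hTV := Finset.card_le_univ (closedNbhd G T)
  calc pdRad G ≤ pdRadS G T := pdRad_le_pdRadS hT (hT2.trans hgamma.symm)
    _ ≤ 1 + (Fintype.card V - (pdSeq G T 1).card) := pdRadS_le hT le_rfl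
    _ ≤ n - 5 := by rw [pdSeq_one]; omega
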